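/- arXiv:1501.04302 — 11 statements merged into one kernel-verified Lean document; each statement's English description precedes it below -/
import Mathlib

section
/- For any semigroup S and any subset A of S, the separator Sep(A) is a subsemigroup of S (possibly empty): if x, y ∈ Sep(A), then xy ∈ Sep(A). -/
def separator {S : Type*} [Mul S] (A : Set S) : Set S :=
  {x | (∀ a ∈ A, x * a ∈ A) ∧ (∀ a ∈ A, a * x ∈ A) ∧
       (∀ a ∉ A, x * a ∉ A) ∧ (∀ a ∉ A, a * x ∉ A)}

section Invariance

variable {S : Type*} [Semigroup S] {B : Set S} {x y : S}

theorem mul_mem_of_left_invariant (hx : ∀ a ∈ B, x * a ∈ B) (hy : ∀ a ∈ B, y * a ∈ B) :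
    ∀ a ∈ B, x * y * a ∈ B := fun a ha => by
  rw [mul_assoc]
  exact hx _ (hy a ha)

theorem mul_mem_of_right_invariant (hx : ∀ a ∈ B, a * x ∈ B) (hy : ∀ a ∈ B, a * y ∈ B) :
    ∀ a ∈ B, a * (x * y) ∈ B := fun a ha => by
  rw [← mul_assoc]
  exact hy _ (hx a ha)

end Invariance

theorem sep_subsemigroup {S : Type*} [Semigroup S] (A : Set S)
    {x y : S} (hx : x ∈ separator A) (hy : y ∈ separator A) : x * y ∈ separator A := by
  obtain ⟨hxA, hAx, hxAc, hAcx⟩ := hx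
  obtain ⟨hyA, hAy, hyAc, hAcy⟩ := hy
  exact ⟨mul_mem_of_left_invariant hxA hyA, mul_mem_of_right_invariant hAx hAy,
    mul_mem_of_left_invariant (B := Aᶜ) hxAc hyAc, mul_mem_of_right_invariant (B := Aᶜ) hAcx hAcy⟩
end

section
/- Let S be a semigroup, p a congruence on S, and U a union of a family of congruence classes of S modulo p. Then Sep(U) is either empty or a union of congruence classes of S modulo p. -/
namespace Con

variable {S : Type*} [Mul S] {p : Con S} {U : Set S} {a b : S}

def Saturated (p : Con S) (U : Set S) : Prop :=
  ∀ a b : S, a ∈ U → p a b → b ∈ U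

theorem Saturated.mem_iff (hU : p.Saturated U) (hab : p a b) : a ∈ U ↔ b ∈ U :=
  ⟨fun ha => hU a b ha hab, fun hb => hU b a hb (p.symm hab)⟩

theorem Saturated.mul_left_mem_iff (hU : p.Saturated U) (hab : p a b) (u : S) :
    a * u ∈ U ↔ b * u ∈ U :=
  hU.mem_iff (p.mul hab (p.refl u))

theorem Saturated.mul_right_mem_iff (hU : p.Saturated U) (hab : p a b) (u : S) :
    u * a ∈ U ↔ u * b ∈ U :=
  hU.mem_iff (p.mul (p.refl u) hab)

theorem Saturated.mem_separator_iff (hU : p.Saturated U) (hab : p a b) :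
    a ∈ separator U ↔ b ∈ separator U := by
  simp only [separator, Set.mem_ofPred_eq, hU.mul_left_mem_iff hab, hU.mul_right_mem_iff hab]

theorem Saturated.separator (hU : p.Saturated U) : p.Saturated (separator U) :=
  fun _ _ ha hab => (hU.mem_separator_iff hab).mp ha

end Con

theorem sep_of_union_of_classes {S : Type*} [Semigroup S] (p : Con S) (U : Set S)
    (hU : ∀ a b : S, a ∈ U → p a b → b ∈ U) :
    separator U = ∅ ∨ ∀ a b : S, a ∈ separator U → p a b → b ∈ separator U :=
  Or.inr (Con.Saturated.separator hU)
end

section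
/- Let S be a semigroup, p a congruence on S, U a union of congruence classes modulo p, a ∈ Sep(U), and b ∉ Sep(U). Then (a,b) ∉ p. -/
section

variable {S : Type*} [Mul S] (p : Con S) {U : Set S}

theorem Con.mem_iff_of_saturated (hU : ∀ a b : S, a ∈ U → p a b → b ∈ U) {x y : S}
    (h : p x y) : x ∈ U ↔ y ∈ U :=
  ⟨(hU x y · h), (hU y x · (p.symm h))⟩

theorem Con.mem_separator_of_saturated (hU : ∀ a b : S, a ∈ U → p a b → b ∈ U) {a b : S}
    (hab : p a b) (ha : a ∈ separator U) : b ∈ separator U := by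
  obtain ⟨hl, hr, hl', hr'⟩ := ha
  have hL (u : S) : a * u ∈ U ↔ b * u ∈ U := p.mem_iff_of_saturated hU (p.mul hab (p.refl u))
  have hR (u : S) : u * a ∈ U ↔ u * b ∈ U := p.mem_iff_of_saturated hU (p.mul (p.refl u) hab)
  exact ⟨fun u hu => (hL u).1 (hl u hu), fun u hu => (hR u).1 (hr u hu),
    fun u hu => (hL u).not.1 (hl' u hu), fun u hu => (hR u).not.1 (hr' u hu)⟩

end

theorem not_congruent_of_sep {S : Type*} [Semigroup S] (p : Con S) (U : Set S)
    (hU : ∀ a b : S, a ∈ U → p a b → b ∈ U)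
    {a b : S} (ha : a ∈ separator U) (hb : b ∉ separator U) : ¬ p a b :=
  fun hab => hb (p.mem_separator_of_saturated hU hab ha)
end

section
/- Let S be a semigroup, H a subsemigroup of S, and (H_i)_{i∈I} a family of subsets of S with H = ⋂_{i∈I} Sep(H_i). Then each H_i is a union of congruence classes of S modulo the congruence P(H;H_i,I). -/
section separator

variable {S : Type*} [Mul S] {A : Set S} {x : S}

theorem mul_mem_iff_of_mem_separator_left (hx : x ∈ separator A) (a : S) :
    x * a ∈ A ↔ a ∈ A :=
  ⟨fun h => by_contra fun ha => hx.2.2.1 a ha h, hx.1 a⟩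

theorem mul_mem_iff_of_mem_separator_right (hx : x ∈ separator A) (a : S) :
    a * x ∈ A ↔ a ∈ A :=
  ⟨fun h => by_contra fun ha => hx.2.2.2 a ha h, hx.2.1 a⟩

theorem mul_mul_mem_iff_of_mem_separator (hx : x ∈ separator A) (a : S) :
    x * a * x ∈ A ↔ a ∈ A := by
  rw [mul_mem_iff_of_mem_separator_right hx, mul_mem_iff_of_mem_separator_left hx]

end separator

theorem Hi_union_of_classes_general {S : Type*} [Semigroup S] {I : Type*} (H : Set S) (Hi : I → Set S)
    (hH : H.Nonempty)
    (hsep : H = ⋂ i : I, separator (Hi i)) :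
    ∀ i : I, ∀ a b : S, a ∈ Hi i →
      (∀ j : I, ∀ x y : S, (x * a * y ∈ Hi j ↔ x * b * y ∈ Hi j)) → b ∈ Hi i := by
  intro i a b ha hab
  obtain ⟨h, hh⟩ := hH
  have hsepi : h ∈ separator (Hi i) := Set.mem_iInter.mp (hsep ▸ hh) i
  rw [← mul_mul_mem_iff_of_mem_separator hsepi] at ha ⊢
  exact (hab i h h).mp ha

theorem Hi_union_of_classes {S : Type*} [Semigroup S] {I : Type*} (H : Set S) (Hi : I → Set S)
    (hH : H.Nonempty) (hmul : ∀ a ∈ H, ∀ b ∈ H, a * b ∈ H)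
    (hsep : H = ⋂ i : I, separator (Hi i)) :
    ∀ i : I, ∀ a b : S, a ∈ Hi i →
      (∀ j : I, ∀ x y : S, (x * a * y ∈ Hi j ↔ x * b * y ∈ Hi j)) → b ∈ Hi i :=
  Hi_union_of_classes_general H Hi hH hsep
end

section
/- Let S be a semigroup, H a subsemigroup of S, and (H_i)_{i∈I} a family of subsets of S with H = ⋂_{i∈I} Sep(H_i). Then H itself is a union of congruence classes of S modulo the congruence P(H;H_i,I). -/
theorem mem_separator_iff {S : Type*} [Mul S] {A : Set S} {x : S} :
    x ∈ separator A ↔ ∀ c, (x * c ∈ A ↔ c ∈ A) ∧ (c * x ∈ A ↔ c ∈ A) := by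
  simp only [separator, Set.mem_ofPred_eq]
  constructor
  · rintro ⟨hl, hr, hl', hr'⟩ c
    exact ⟨⟨not_imp_not.mp (hl' c), hl c⟩, ⟨not_imp_not.mp (hr' c), hr c⟩⟩
  · intro h
    exact ⟨fun c => (h c).1.2, fun c => (h c).2.2,
      fun c => mt (h c).1.1, fun c => mt (h c).2.1⟩

theorem mem_separator_of_forall_mul_mem_iff {S : Type*} [Semigroup S] {A : Set S} {a b : S}
    (ha : a ∈ separator A) (hab : ∀ x y, x * a * y ∈ A ↔ x * b * y ∈ A) :
    b ∈ separator A := by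
  rw [mem_separator_iff] at ha ⊢
  refine fun c => ⟨?_, ?_⟩
  · calc b * c ∈ A ↔ a * b * c ∈ A := by rw [mul_assoc, (ha _).1]
      _ ↔ a * a * c ∈ A := (hab a c).symm
      _ ↔ c ∈ A := by rw [mul_assoc, (ha _).1, (ha _).1]
  · calc c * b ∈ A ↔ c * b * a ∈ A := ((ha _).2).symm
      _ ↔ c * a * a ∈ A := (hab c a).symm
      _ ↔ c ∈ A := by rw [(ha _).2, (ha _).2]

theorem H_union_of_classes_general {S : Type*} [Semigroup S] {I : Type*} (H : Set S) (Hi : I → Set S)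
    (hsep : H = ⋂ i : I, separator (Hi i)) :
    ∀ a b : S, a ∈ H →
      (∀ j : I, ∀ x y : S, (x * a * y ∈ Hi j ↔ x * b * y ∈ Hi j)) → b ∈ H := by
  intro a b ha hab
  rw [hsep, Set.mem_iInter] at ha ⊢
  exact fun j => mem_separator_of_forall_mul_mem_iff (ha j) (hab j)

theorem H_union_of_classes {S : Type*} [Semigroup S] {I : Type*} (H : Set S) (Hi : I → Set S)
    (hH : H.Nonempty) (hmul : ∀ a ∈ H, ∀ b ∈ H, a * b ∈ H)
    (hsep : H = ⋂ i : I, separator (Hi i)) :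
    ∀ a b : S, a ∈ H →
      (∀ j : I, ∀ x y : S, (x * a * y ∈ Hi j ↔ x * b * y ∈ Hi j)) → b ∈ H :=
  H_union_of_classes_general H Hi hsep
end

section
/- Let S be a commutative semigroup, H a subsemigroup of S, and (H_i)_{i∈I} a family of subsets of S with H = ⋂_{i∈I} Sep(H_i). Then any two elements of H are congruent modulo P(H;H_i,I); that is, H is contained in a single congruence class. -/
theorem mul_mem_iff_of_mem_separator {S : Type*} [Mul S] {A : Set S} {s : S}
    (hs : s ∈ separator A) (z : S) : s * z ∈ A ↔ z ∈ A :=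
  ⟨fun h => by_contra fun hz => hs.2.2.1 z hz h, hs.1 z⟩

theorem mem_iff_of_mem_separator {S : Type*} [CommSemigroup S] {A : Set S} {a b : S}
    (ha : a ∈ separator A) (hb : b ∈ separator A) (x y : S) :
    x * a * y ∈ A ↔ x * b * y ∈ A := by
  have hswap : b * (x * a * y) = a * (x * b * y) := by ac_rfl
  rw [← mul_mem_iff_of_mem_separator hb, hswap, mul_mem_iff_of_mem_separator ha]

theorem H_in_one_class_general {S : Type*} [CommSemigroup S] {I : Type*} (H : Set S) (Hi : I → Set S)
    (hsep : H = ⋂ i : I, separator (Hi i)) :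
    ∀ a ∈ H, ∀ b ∈ H, ∀ j : I, ∀ x y : S, (x * a * y ∈ Hi j ↔ x * b * y ∈ Hi j) := by
  intro a ha b hb j
  rw [hsep, Set.mem_iInter] at ha hb
  exact mem_iff_of_mem_separator (ha j) (hb j)

theorem H_in_one_class {S : Type*} [CommSemigroup S] {I : Type*} (H : Set S) (Hi : I → Set S)
    (hH : H.Nonempty) (hmul : ∀ a ∈ H, ∀ b ∈ H, a * b ∈ H)
    (hsep : H = ⋂ i : I, separator (Hi i)) :
    ∀ a ∈ H, ∀ b ∈ H, ∀ j : I, ∀ x y : S, (x * a * y ∈ Hi j ↔ x * b * y ∈ Hi j) :=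
  H_in_one_class_general H Hi hsep
end

section
/- Let S be a commutative semigroup and p a monoid congruence on S with identity class H and set of all congruence classes {S_k : k ∈ K}. Then p equals the congruence P(H; S_k, K), i.e., (a,b) ∈ p if and only if for every k ∈ K and all x,y ∈ S, xay ∈ S_k ↔ xby ∈ S_k. -/
/-! Congruent elements stay congruent in every context `x * _ * y`, so they fall into the same
classes there. Conversely, if `e` is an identity modulo `p`, the context `e * _ * e` returns every
element to its own class, so `a` and `b` lie in the class of `e * b * e`. -/

namespace Con

variable {M : Type*} [Mul M] (c : Con M)

theorem mul_mul_rel_iff_of_rel {a b : M} (hab : c a b) (s x y : M) :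
    c (x * a * y) s ↔ c (x * b * y) s := by
  have hctx : c (x * a * y) (x * b * y) := c.mul (c.mul (c.refl x) hab) (c.refl y)
  exact ⟨c.trans (c.symm hctx), c.trans hctx⟩

theorem mul_mul_rel_self_of_identity {e : M} (he : ∀ u, c (u * e) u ∧ c (e * u) u) (u : M) :
    c (e * u * e) u :=
  c.trans (c.mul (he u).2 (c.refl e)) (he u).1

theorem rel_of_forall_mul_mul_rel_iff {e : M} (he : ∀ u, c (u * e) u ∧ c (e * u) u) {a b : M}
    (H : ∀ s x y : M, c (x * a * y) s ↔ c (x * b * y) s) : c a b :=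
  have hab : c (e * a * e) (e * b * e) := (H (e * b * e) e e).2 (c.refl _)
  c.trans (c.symm (c.mul_mul_rel_self_of_identity he a))
    (c.trans hab (c.mul_mul_rel_self_of_identity he b))

end Con

theorem monoid_congruence_eq_P {S : Type*} [CommSemigroup S] (p : Con S) (h : S)
    (hid : ∀ u : S, p (u * h) u ∧ p (h * u) u) :
    ∀ a b : S, p a b ↔ ∀ s x y : S, (p (x * a * y) s ↔ p (x * b * y) s) :=
  fun _ _ => ⟨p.mul_mul_rel_iff_of_rel, p.rel_of_forall_mul_mul_rel_iff hid⟩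
end

section
/- Every monoid congruence on a commutative semigroup S arises as P(H;H_i,I) for a subsemigroup H of S and a family (H_i)_{i∈I} of subsets with H = ⋂_{i∈I} Sep(H_i): namely, take H the identity class and (H_i) the family of all congruence classes. -/
/-! The class of the identity `e` of `M ⧸ c` consists of the elements acting as the identity on
every class, so it lies in every separator; conversely `x ∈ Sep([e])` gives `x ≈ x e ∈ [e]`.
Contexts `x * _ * y` preserve `c`, and the context `e * _ * e` recovers every class. -/

section

variable {M : Type*} [Mul M] (c : Con M)

theorem mem_separator_of_forall_con_mul {x : M} (hx : ∀ a, c (x * a) a ∧ c (a * x) a)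
    (s : M) : x ∈ separator {z | c z s} :=
  ⟨fun a ha => c.trans (hx a).1 ha, fun a ha => c.trans (hx a).2 ha,
    fun a ha hxa => ha (c.trans (c.symm (hx a).1) hxa),
    fun a ha hax => ha (c.trans (c.symm (hx a).2) hax)⟩

variable {e : M}

theorem con_mul_of_con_unit (he : ∀ u, c (u * e) u ∧ c (e * u) u) {x : M} (hx : c x e)
    (a : M) : c (x * a) a ∧ c (a * x) a :=
  ⟨c.trans (c.mul hx (c.refl a)) (he a).2, c.trans (c.mul (c.refl a) hx) (he a).1⟩

theorem setOf_con_unit_eq_iInter_separator (he : ∀ u, c (u * e) u ∧ c (e * u) u) :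
    {x | c x e} = ⋂ s, separator {x | c x s} := by
  ext x
  simp only [Set.mem_iInter]
  refine ⟨fun hx s => mem_separator_of_forall_con_mul c (con_mul_of_con_unit c he hx) s,
    fun hx => ?_⟩
  have hxe : c (x * e) e := (hx e).1 e (c.refl e)
  exact c.trans (c.symm (he x).1) hxe

theorem con_iff_forall_mul_mul_con (he : ∀ u, c (u * e) u ∧ c (e * u) u) {a b : M} :
    c a b ↔ ∀ s x y, (c (x * a * y) s ↔ c (x * b * y) s) := by
  refine ⟨fun hab s x y => ?_, fun H => ?_⟩
  · have hctx : c (x * a * y) (x * b * y) := c.mul (c.mul (c.refl x) hab) (c.refl y)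
    exact ⟨c.trans (c.symm hctx), c.trans hctx⟩
  · have hunit : ∀ u, c (e * u * e) u := fun u => c.trans (he (e * u)).1 (he u).2
    exact c.trans (c.symm ((H a e e).1 (hunit a))) (hunit b)

end

theorem monoid_congruence_arises {S : Type*} [CommSemigroup S] (p : Con S) (h : S)
    (hid : ∀ u : S, p (u * h) u ∧ p (h * u) u) :
    {x : S | p x h} = (⋂ s : S, separator {x : S | p x s}) ∧
    (∀ a b : S, p a b ↔ ∀ s x y : S, (x * a * y ∈ {z : S | p z s} ↔ x * b * y ∈ {z : S | p z s})) :=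
  ⟨setOf_con_unit_eq_iInter_separator p hid, fun _ _ => con_iff_forall_mul_mul_con p hid⟩
end

section
/- Let S be a commutative semigroup, p a monoid congruence on S with identity class H, and let (H_i)_{i∈I} be the family of all subsets A ⊆ S with H ⊆ Sep(A). Then P(H;H_i,I) ⊆ p ⊆ P_H. -/
namespace Con

variable {S : Type*} [Mul S] (p : Con S)

def IsSaturated (A : Set S) : Prop :=
  ∀ ⦃x y : S⦄, p x y → (x ∈ A ↔ y ∈ A)

theorem isSaturated_setOf_rel (c : S) : p.IsSaturated {z | p z c} :=
  fun _ _ hxy => ⟨p.trans (p.symm hxy), p.trans hxy⟩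

variable {p}

theorem IsSaturated.mul_mul_mem_iff {A : Set S} (hA : p.IsSaturated A) {a b : S} (hab : p a b)
    (x y : S) : x * a * y ∈ A ↔ x * b * y ∈ A :=
  hA (p.mul (p.mul (p.refl x) hab) (p.refl y))

theorem setOf_rel_subset_separator {h : S} (hid : ∀ u : S, p (u * h) u ∧ p (h * u) u)
    {A : Set S} (hA : p.IsSaturated A) : {x : S | p x h} ⊆ separator A := by
  intro u (hu : p u h)
  have hleft (z : S) : p (u * z) z := p.trans (p.mul hu (p.refl z)) (hid z).2
  have hright (z : S) : p (z * u) z := p.trans (p.mul (p.refl z) hu) (hid z).1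
  exact ⟨fun z hz => (hA (hleft z)).2 hz, fun z hz => (hA (hright z)).2 hz,
    fun z hz hc => hz ((hA (hleft z)).1 hc), fun z hz hc => hz ((hA (hright z)).1 hc)⟩

end Con

theorem P_le_p_le_PH {S : Type*} [CommSemigroup S] (p : Con S) (h : S)
    (hid : ∀ u : S, p (u * h) u ∧ p (h * u) u) :
    (∀ a b : S,
      (∀ A : Set S, {x : S | p x h} ⊆ separator A → ∀ x y : S, (x * a * y ∈ A ↔ x * b * y ∈ A)) →
        p a b) ∧
    (∀ a b : S, p a b →
      ∀ x y : S, (x * a * y ∈ {z : S | p z h} ↔ x * b * y ∈ {z : S | p z h})) := by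
  refine ⟨fun a b hab => ?_, fun a b hab => (p.isSaturated_setOf_rel h).mul_mul_mem_iff hab⟩
  -- Test with the `p`-class of `a`, sandwiching both elements between copies of `h`.
  have hsep := Con.setOf_rel_subset_separator hid (p.isSaturated_setOf_rel a)
  have hsandwich (c : S) : p (h * c * h) c := p.trans (hid (h * c)).1 (hid c).2
  exact p.symm (p.trans (p.symm (hsandwich b)) ((hab _ hsep h h).1 (hsandwich a)))
end

section
/- Let S be a semigroup and H a unitary subsemigroup of S. Then Sep(H) = H. -/
section Separator

variable {S : Type*} [Mul S] {H : Set S}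

theorem separator_subset_of_left_unitary (hH : H.Nonempty)
    (hleft : ∀ a b : S, a * b ∈ H → a ∈ H → b ∈ H) :
    separator H ⊆ H := by
  rintro x ⟨-, hHx, -, -⟩
  obtain ⟨h, hh⟩ := hH
  exact hleft h x (hHx h hh) hh

theorem subset_separator_of_unitary (hmul : ∀ a ∈ H, ∀ b ∈ H, a * b ∈ H)
    (hleft : ∀ a b : S, a * b ∈ H → a ∈ H → b ∈ H)
    (hright : ∀ a b : S, a * b ∈ H → b ∈ H → a ∈ H) :
    H ⊆ separator H := fun x hx =>
  ⟨fun a ha => hmul x hx a ha, fun a ha => hmul a ha x hx,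
    fun a ha hxa => ha (hleft x a hxa hx), fun a ha hax => ha (hright a x hax hx)⟩

end Separator

theorem sep_of_unitary {S : Type*} [Semigroup S] (H : Set S)
    (hH : H.Nonempty) (hmul : ∀ a ∈ H, ∀ b ∈ H, a * b ∈ H)
    (hu : ∀ a b : S, (a * b ∈ H → a ∈ H → b ∈ H) ∧ (a * b ∈ H → b ∈ H → a ∈ H)) :
    separator H = H :=
  (separator_subset_of_left_unitary hH fun a b => (hu a b).1).antisymm
    (subset_separator_of_unitary hmul (fun a b => (hu a b).1) fun a b => (hu a b).2)
end

section
/- Let S be a semigroup and A ⊆ S. If Sep(A) ∩ A ≠ ∅, then Sep(A) ⊆ A; consequently, either Sep(A) ⊆ A or Sep(A) ⊆ S∖A. -/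
/-- For `s ∈ separator A ∩ A` and `x ∈ separator A ∖ A`, the product `s * x` would lie both in
`A` (as `x` separates and `s ∈ A`) and outside `A` (as `s` separates and `x ∉ A`). -/
theorem separator_subset_of_nonempty_inter {S : Type*} [Mul S] {A : Set S}
    (h : (separator A ∩ A).Nonempty) : separator A ⊆ A := by
  obtain ⟨s, hs, hsA⟩ := h
  intro x hx
  by_contra hxA
  exact hs.2.2.1 x hxA (hx.2.1 s hsA)

theorem sep_subset_or {S : Type*} [Semigroup S] (A : Set S) :
    ((separator A ∩ A).Nonempty → separator A ⊆ A) ∧ (separator A ⊆ A ∨ separator A ⊆ Aᶜ) := by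
  refine ⟨separator_subset_of_nonempty_inter, ?_⟩
  by_cases h : (separator A ∩ A).Nonempty
  · exact Or.inl (separator_subset_of_nonempty_inter h)
  · right
    rw [Set.not_nonempty_iff_eq_empty, ← Set.disjoint_iff_inter_eq_empty] at h
    exact h.subset_compl_right
end
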